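/- arXiv:1009.3356 — 5 statements merged into one kernel-verified Lean document; each statement's English description precedes it below -/
import Mathlib

section
/- Let H be a real Hilbert space, let T be an invertible positive bounded operator on H, let A be a bounded operator on H with closed range, let b ∈ H be such that the set S = {x ∈ H : Ax = b} is nonempty, and let p ∈ H and a ∈ ℝ. Let B = A ∘ T^{-1/2} and let B‡ be the Moore–Penrose inverse of B. Define Φ(x) = ⟨x, Tx⟩ + ⟨p, x⟩ + a and x̂ = T^{-1/2} B‡ ((1/2) A T^{-1} p + b) − (1/2) T^{-1} p. Then A x̂ = b, Φ(x̂) ≤ Φ(x) for every x ∈ S, and if x ∈ S satisfies Φ(x) = Φ(x̂) then x = x̂ (i.e., x̂ is the unique minimizer of Φ over S). -/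
/-!
Write `T = X²` with `X = T^{1/2}` self-adjoint and invertible. Completing the square gives
`Φ x = ‖X x + ½ X⁻¹ p‖² + const`, so in the variable `y = X x + ½ X⁻¹ p` the problem becomes: minimise
`‖y‖` subject to `B y = c`, where `B = A X⁻¹` and `c = ½ A T⁻¹ p + b`. Since `B‡ B` is a self-adjoint
idempotent, i.e. an orthogonal projection, every solution `y` splits orthogonally as
`B‡ c + (y - B‡ c)`, so `B‡ c` is the unique solution of least norm, and `x̂` is its preimage.
-/

open scoped RealInnerProductSpace

namespace ContinuousLinearMap

variable {E F : Type*} [NormedAddCommGroup E] [InnerProductSpace ℝ E]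
  [NormedAddCommGroup F] [InnerProductSpace ℝ F]

theorem inner_apply_add_inner_eq_norm_sq_sub_norm_sq {X Xinv T : E →L[ℝ] E}
    (hX : (X : E →ₗ[ℝ] E).IsSymmetric) (hXXinv : X ∘L Xinv = 1) (hX2 : X ∘L X = T) (p x : E) :
    ⟪x, T x⟫ + ⟪p, x⟫ = ‖X x + (1/2 : ℝ) • Xinv p‖ ^ 2 - ‖(1/2 : ℝ) • Xinv p‖ ^ 2 := by
  have hXs (u v : E) : ⟪X u, v⟫ = ⟪u, X v⟫ := hX u v
  have hT : ⟪x, T x⟫ = ‖X x‖ ^ 2 := by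
    rw [← hX2, comp_apply, ← hXs, real_inner_self_eq_norm_sq]
  have hp : ⟪X x, (1/2 : ℝ) • Xinv p⟫ = 1/2 * ⟪p, x⟫ := by
    rw [real_inner_smul_right, hXs, ← comp_apply X Xinv, hXXinv, one_apply_eq_self, real_inner_comm]
  rw [norm_add_sq_real, hT, hp]
  ring

variable {B : E →L[ℝ] F} {Bd : F →L[ℝ] E}

theorem norm_sq_eq_norm_sq_pinv_apply_add_norm_sq_sub (h1 : B ∘L Bd ∘L B = B)
    (h4 : (Bd ∘L B : E →ₗ[ℝ] E).IsSymmetric) (y : E) :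
    ‖y‖ ^ 2 = ‖Bd (B y)‖ ^ 2 + ‖y - Bd (B y)‖ ^ 2 := by
  have hidem : Bd (B (Bd (B y))) = Bd (B y) := congrArg Bd (DFunLike.congr_fun h1 y)
  have horth : ⟪Bd (B y), y - Bd (B y)⟫ = 0 := by
    simpa only [coe_coe, comp_apply, map_sub, hidem, sub_self, inner_zero_right]
      using h4 y (y - Bd (B y))
  have := norm_add_sq_eq_norm_sq_add_norm_sq_real horth
  rw [add_sub_cancel] at this
  simpa only [sq] using this

end ContinuousLinearMap

open ContinuousLinearMap in
theorem min_quadratic_functional_pos_def_general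
    {H : Type*} [NormedAddCommGroup H] [InnerProductSpace ℝ H] [CompleteSpace H]
    (T A X Xinv Tinv Bd : H →L[ℝ] H) (b p : H) (a : ℝ)
    (hTinv : T ∘L Tinv = 1 ∧ Tinv ∘L T = 1)
    (hX : X.IsPositive) (hX2 : X ∘L X = T)
    (hXinv : X ∘L Xinv = 1 ∧ Xinv ∘L X = 1)
    (hS : ∃ x, A x = b)
    -- `Bd` is the Moore–Penrose inverse of `B = A ∘ T^{-1/2}`:
    (hBd1 : (A ∘L Xinv) ∘L Bd ∘L (A ∘L Xinv) = A ∘L Xinv)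
    (hBd4 : ContinuousLinearMap.adjoint (Bd ∘L (A ∘L Xinv)) = Bd ∘L (A ∘L Xinv))
    (Φ : H → ℝ) (hΦ : ∀ x, Φ x = ⟪x, T x⟫ + ⟪p, x⟫ + a)
    (xhat : H)
    (hxhat : xhat = Xinv (Bd ((1/2 : ℝ) • A (Tinv p) + b)) - (1/2 : ℝ) • Tinv p) :
    A xhat = b ∧ (∀ x, A x = b → Φ xhat ≤ Φ x) ∧
      (∀ x, A x = b → Φ x = Φ xhat → x = xhat) := by
  obtain ⟨x₀, hx₀⟩ := hS
  have hXsymm := hX.isSelfAdjoint.isSymmetric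
  have hXXinv (v : H) : X (Xinv v) = v := DFunLike.congr_fun hXinv.1 v
  have hXinvX (v : H) : Xinv (X v) = v := DFunLike.congr_fun hXinv.2 v
  have hTinv_eq : Tinv = Xinv ∘L Xinv := left_inv_eq_right_inv hTinv.2 <| by
    ext v
    simp [← hX2, hXXinv]
  set y : H → H := fun x => X x + (1/2 : ℝ) • Xinv p
  have hBy (x : H) : A (Xinv (y x)) = A x + (1/2 : ℝ) • A (Tinv p) := by
    simp only [y, comp_apply, map_add, map_smul, hXinvX, hTinv_eq]
  have hyhat : y xhat = Bd (A (Xinv (y x₀))) := by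
    simp only [y, hBy, hx₀, hxhat, hTinv_eq, comp_apply, map_sub, map_smul, hXXinv]
    rw [sub_add_cancel, add_comm]
  have hAxhat : A xhat = b := by
    have := DFunLike.congr_fun hBd1 (y x₀)
    simp only [comp_apply] at this
    rw [← hyhat, hBy, hBy, hx₀] at this
    exact add_right_cancel this
  have hΦ_eq (x : H) (hx : A x = b) : Φ x = Φ xhat + ‖y x - y xhat‖ ^ 2 := by
    have hpyth := norm_sq_eq_norm_sq_pinv_apply_add_norm_sq_sub hBd1
      (isSelfAdjoint_iff'.mpr hBd4).isSymmetric (y x)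
    simp only [comp_apply] at hpyth
    rw [hBy, hx, ← hx₀, ← hBy, ← hyhat] at hpyth
    rw [hΦ, hΦ, inner_apply_add_inner_eq_norm_sq_sub_norm_sq hXsymm hXinv.1 hX2,
      inner_apply_add_inner_eq_norm_sq_sub_norm_sq hXsymm hXinv.1 hX2]
    linarith
  refine ⟨hAxhat, fun x hx => ?_, fun x hx hΦx => ?_⟩
  · rw [hΦ_eq x hx]
    exact le_add_of_nonneg_right (sq_nonneg _)
  · rw [hΦ_eq x hx, add_eq_left, sq_eq_zero_iff, norm_eq_zero, sub_eq_zero] at hΦx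
    rw [← hXinvX x, ← hXinvX xhat]
    exact congrArg Xinv (add_right_cancel hΦx)

/-- Minimization of a positive definite quadratic functional `Φ(x) = ⟪x, Tx⟫ + ⟪p, x⟫ + a`
over the solution set `S = {x : A x = b}` of a consistent linear constraint:
the unique minimizer is `xhat = T^{-1/2} (A T^{-1/2})‡ ((1/2) A T^{-1} p + b) − (1/2) T^{-1} p`,
where `‡` denotes the Moore–Penrose inverse. -/
theorem min_quadratic_functional_pos_def
    {H : Type*} [NormedAddCommGroup H] [InnerProductSpace ℝ H] [CompleteSpace H]
    (T A X Xinv Tinv Bd : H →L[ℝ] H) (b p : H) (a : ℝ)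
    (hT : T.IsPositive)
    (hTinv : T ∘L Tinv = 1 ∧ Tinv ∘L T = 1)
    (hX : X.IsPositive) (hX2 : X ∘L X = T)
    (hXinv : X ∘L Xinv = 1 ∧ Xinv ∘L X = 1)
    (hA : IsClosed (LinearMap.range (A : H →ₗ[ℝ] H) : Set H))
    (hS : ∃ x, A x = b)
    -- `Bd` is the Moore–Penrose inverse of `B = A ∘ T^{-1/2}`:
    (hBd1 : (A ∘L Xinv) ∘L Bd ∘L (A ∘L Xinv) = A ∘L Xinv)
    (hBd2 : Bd ∘L (A ∘L Xinv) ∘L Bd = Bd)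
    (hBd3 : ContinuousLinearMap.adjoint ((A ∘L Xinv) ∘L Bd) = (A ∘L Xinv) ∘L Bd)
    (hBd4 : ContinuousLinearMap.adjoint (Bd ∘L (A ∘L Xinv)) = Bd ∘L (A ∘L Xinv))
    (Φ : H → ℝ) (hΦ : ∀ x, Φ x = ⟪x, T x⟫ + ⟪p, x⟫ + a)
    (xhat : H)
    (hxhat : xhat = Xinv (Bd ((1/2 : ℝ) • A (Tinv p) + b)) - (1/2 : ℝ) • Tinv p) :
    A xhat = b ∧ (∀ x, A x = b → Φ xhat ≤ Φ x) ∧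
      (∀ x, A x = b → Φ x = Φ xhat → x = xhat) :=
  min_quadratic_functional_pos_def_general T A X Xinv Tinv Bd b p a hTinv hX hX2 hXinv hS hBd1 hBd4
    Φ hΦ xhat hxhat
end

section
/- Let H be a real Hilbert space, let T be a positive bounded operator on H with closed range, and let X be the positive square root of T (X positive, X² = T). Let A be a bounded operator on H with closed range and let b ∈ H be such that the set S ∩ N(T)^⊥ is nonempty, where S = {x ∈ H : Ax = b} and N(T)^⊥ is the orthogonal complement of the kernel of T. Let X‡, T‡ be the Moore–Penrose inverses of X and T, assume that the operator P_{A*} P_T (the composition of the orthogonal projection onto N(A)^⊥ with the orthogonal projection onto the range of T) has closed range, and let C‡ be the Moore–Penrose inverse of C = A ∘ X‡. Let p ∈ H, a ∈ ℝ, and define Φ(x) = ⟨x, Tx⟩ + ⟨p, x⟩ + a and x̂ = X‡ C‡ ((1/2) A T‡ p + b) − (1/2) T‡ p. Then x̂ ∈ S ∩ N(T)^⊥, Φ(x̂) ≤ Φ(x) for every x ∈ S ∩ N(T)^⊥, and if x ∈ S ∩ N(T)^⊥ satisfies Φ(x) = Φ(x̂) then x = x̂ (i.e., x̂ is the unique minimizer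 of Φ over S ∩ N(T)^⊥). -/
/-!
Since `X` is self-adjoint, its Moore–Penrose inverse `X‡` is self-adjoint and commutes with `X`;
hence `X‡X` is the orthogonal projection onto `N(X)^⊥ = N(T)^⊥`, and `T‡ = (X‡)²` by uniqueness of
Moore–Penrose inverses. On `N(T)^⊥` the substitution `z = Xx + c` with `c = ½X‡p` completes the
square, `Φ(x) = ‖z‖² - ‖c‖² + a`, and turns the constraint `Ax = b` into `Cz = d` with
`d = ½AT‡p + b`. Every solution of `Cz = d` satisfies `‖z‖² = ‖C‡d‖² + ‖z - C‡d‖²`, and `x̂` is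
the point of `N(T)^⊥` with `Xx̂ + c = C‡d`, so `Φ(x) = Φ(x̂) + ‖X(x - x̂)‖²` on the feasible set.
-/

open scoped InnerProductSpace RealInnerProductSpace

structure IsMoorePenroseInverse {R : Type*} [Monoid R] [StarMul R] (b y : R) : Prop where
  mul_inv_mul : b * y * b = b
  inv_mul_inv : y * b * y = y
  isSelfAdjoint_mul_inv : IsSelfAdjoint (b * y)
  isSelfAdjoint_inv_mul : IsSelfAdjoint (y * b)

namespace IsMoorePenroseInverse

section StarMonoid

variable {R : Type*} [Monoid R] [StarMul R] {a b y z : R}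

theorem unique (hy : IsMoorePenroseInverse b y) (hz : IsMoorePenroseInverse b z) : y = z := by
  have hby : b * y = b * z :=
    calc b * y = b * z * b * y := by rw [hz.mul_inv_mul]
      _ = star (b * z) * star (b * y) := by
          rw [hz.isSelfAdjoint_mul_inv.star_eq, hy.isSelfAdjoint_mul_inv.star_eq]
          simp only [mul_assoc]
      _ = star (b * y * b * z) := by rw [← star_mul]; simp only [mul_assoc]
      _ = b * z := by rw [hy.mul_inv_mul, hz.isSelfAdjoint_mul_inv.star_eq]
  have hyb : y * b = z * b :=
    calc y * b = y * (b * z * b) := by rw [hz.mul_inv_mul]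
      _ = star (y * b) * star (z * b) := by
          rw [hz.isSelfAdjoint_inv_mul.star_eq, hy.isSelfAdjoint_inv_mul.star_eq]
          simp only [mul_assoc]
      _ = star (z * (b * y * b)) := by rw [← star_mul]; simp only [mul_assoc]
      _ = z * b := by rw [hy.mul_inv_mul, hz.isSelfAdjoint_inv_mul.star_eq]
  calc y = y * b * y := hy.inv_mul_inv.symm
    _ = z * b * z := by rw [mul_assoc, hby, ← mul_assoc, hyb]
    _ = z := hz.inv_mul_inv

protected theorem star (h : IsMoorePenroseInverse b y) :
    IsMoorePenroseInverse (star b) (star y) where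
  mul_inv_mul := by simpa only [star_mul, mul_assoc] using congrArg star h.mul_inv_mul
  inv_mul_inv := by simpa only [star_mul, mul_assoc] using congrArg star h.inv_mul_inv
  isSelfAdjoint_mul_inv := by rw [← star_mul, IsSelfAdjoint.star_iff]; exact h.isSelfAdjoint_inv_mul
  isSelfAdjoint_inv_mul := by rw [← star_mul, IsSelfAdjoint.star_iff]; exact h.isSelfAdjoint_mul_inv

theorem isSelfAdjoint (hb : IsSelfAdjoint b) (h : IsMoorePenroseInverse b y) : IsSelfAdjoint y :=
  (hb.star_eq ▸ h.star).unique h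

theorem commute (hb : IsSelfAdjoint b) (h : IsMoorePenroseInverse b y) : Commute b y := by
  rw [Commute, SemiconjBy, ← h.isSelfAdjoint_mul_inv.star_eq, star_mul,
    (h.isSelfAdjoint hb).star_eq, hb.star_eq]

theorem mul_mul_inv (hb : IsSelfAdjoint b) (h : IsMoorePenroseInverse b y) : b * (y * y) = y := by
  rw [← mul_assoc, h.commute hb, h.inv_mul_inv]

theorem mul_self (hb : IsSelfAdjoint b) (h : IsMoorePenroseInverse b y) :
    IsMoorePenroseInverse (b * b) (y * y) := by
  have hbb : b * b * (y * y) = b * y := by rw [mul_assoc, h.mul_mul_inv hb]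
  have hc : Commute (b * b) y := (h.commute hb).mul_left (h.commute hb)
  have hyy : y * y * (b * b) = y * b := by rw [← (hc.mul_right hc).eq, hbb, h.commute hb]
  refine ⟨?_, ?_, ?_, ?_⟩
  · rw [hbb, ← mul_assoc, h.mul_inv_mul]
  · rw [hyy, ← mul_assoc, h.inv_mul_inv]
  · rw [hbb]; exact h.isSelfAdjoint_mul_inv
  · rw [hyy]; exact h.isSelfAdjoint_inv_mul

theorem eq_star_mul (h : IsMoorePenroseInverse b y) : y = star b * (star y * y) := by
  rw [← mul_assoc, ← star_mul, h.isSelfAdjoint_inv_mul.star_eq, h.inv_mul_inv]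

theorem mul_inv_mul_of_comp (hb : IsSelfAdjoint b) (hy : IsMoorePenroseInverse b y)
    (hz : IsMoorePenroseInverse (a * y) z) : b * y * z = z := by
  -- `z = (a y)^* z^* z` and `y^* = y`, so `z` lies in `y R`, on which `b y` acts as the identity.
  obtain ⟨w, rfl⟩ : ∃ w, z = y * w := ⟨star a * (star z * z), by
    conv_lhs => rw [hz.eq_star_mul]
    rw [star_mul, (hy.isSelfAdjoint hb).star_eq, mul_assoc]⟩
  rw [← mul_assoc, mul_assoc b, hy.mul_mul_inv hb]

end StarMonoid

section InnerProductSpace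

open ContinuousLinearMap

variable {𝕜 E : Type*} [RCLike 𝕜] [NormedAddCommGroup E] [InnerProductSpace 𝕜 E] [CompleteSpace E]
  {B Bd : E →L[𝕜] E}

theorem of_comp (h₁ : B ∘L Bd ∘L B = B) (h₂ : Bd ∘L B ∘L Bd = Bd)
    (h₃ : adjoint (B ∘L Bd) = B ∘L Bd) (h₄ : adjoint (Bd ∘L B) = Bd ∘L B) :
    IsMoorePenroseInverse B Bd :=
  ⟨by rw [mul_assoc]; exact h₁, by rw [mul_assoc]; exact h₂, h₃, h₄⟩

theorem mul_inv_mul_apply (h : IsMoorePenroseInverse B Bd) (x : E) : B (Bd (B x)) = B x :=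
  DFunLike.congr_fun h.mul_inv_mul x

theorem inv_mul_inv_apply (h : IsMoorePenroseInverse B Bd) (x : E) : Bd (B (Bd x)) = Bd x :=
  DFunLike.congr_fun h.inv_mul_inv x

theorem mem_orthogonal_ker_iff (h : IsMoorePenroseInverse B Bd) {u : E} :
    u ∈ (LinearMap.ker (B : E →ₗ[𝕜] E))ᗮ ↔ Bd (B u) = u := by
  have hsymm : ∀ v w, ⟪Bd (B v), w⟫_𝕜 = ⟪v, Bd (B w)⟫_𝕜 := h.isSelfAdjoint_inv_mul.isSymmetric
  have hker : ∀ v ∈ LinearMap.ker (B : E →ₗ[𝕜] E), Bd (B v) = 0 := fun v hv => by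
    rw [show B v = 0 from hv, map_zero]
  constructor
  · intro hu
    set w := u - Bd (B u)
    have hw : w ∈ LinearMap.ker (B : E →ₗ[𝕜] E) := by
      change B (u - Bd (B u)) = 0
      rw [map_sub, h.mul_inv_mul_apply, sub_self]
    have hww : ⟪w, w⟫_𝕜 = 0 :=
      calc ⟪w, w⟫_𝕜 = ⟪w, u⟫_𝕜 - ⟪Bd (B w), u⟫_𝕜 := by rw [hsymm, inner_sub_right]
        _ = 0 := by
          rw [(Submodule.mem_orthogonal _ _).mp hu w hw, hker w hw, inner_zero_left, sub_zero]
    exact (sub_eq_zero.mp (inner_self_eq_zero.mp hww)).symm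
  · intro hu
    refine (Submodule.mem_orthogonal _ _).mpr fun v hv => ?_
    rw [← hu, ← hsymm, hker v hv, inner_zero_left]

theorem norm_sq_eq_norm_sq_add_norm_sq_sub {C Cd : E →L[𝕜] E} (h : IsMoorePenroseInverse C Cd) {z d : E}
    (hz : C z = d) : ‖z‖ ^ 2 = ‖Cd d‖ ^ 2 + ‖z - Cd d‖ ^ 2 := by
  have hsymm : ∀ v w, ⟪Cd (C v), w⟫_𝕜 = ⟪v, Cd (C w)⟫_𝕜 := h.isSelfAdjoint_inv_mul.isSymmetric
  have horth : ⟪Cd d, z - Cd d⟫_𝕜 = 0 := by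
    rw [← hz, inner_sub_right, hsymm z z, hsymm z (Cd (C z)), h.inv_mul_inv_apply, sub_self]
  simpa [sq] using norm_add_sq_eq_norm_sq_add_norm_sq_of_inner_eq_zero _ _ horth

end InnerProductSpace

end IsMoorePenroseInverse

section QuadraticFunctional

variable {H : Type*} [NormedAddCommGroup H] [InnerProductSpace ℝ H] {X Xd A Cd : H →L[ℝ] H}

theorem inner_apply_apply_add_inner_eq_norm_sq_sub [CompleteSpace H] (hX : IsSelfAdjoint X)
    (hXd : IsMoorePenroseInverse X Xd) (p : H) {x : H} (hx : Xd (X x) = x) :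
    ⟪x, X (X x)⟫ + ⟪p, x⟫ = ‖X x + (1 / 2 : ℝ) • Xd p‖ ^ 2 - ‖(1 / 2 : ℝ) • Xd p‖ ^ 2 := by
  have h₁ : ⟪x, X (X x)⟫ = ‖X x‖ ^ 2 := by
    rw [← real_inner_self_eq_norm_sq]; exact (hX.isSymmetric x (X x)).symm
  have h₂ : ⟪p, x⟫ = ⟪X x, Xd p⟫ := by
    conv_lhs => rw [← hx]
    rw [real_inner_comm (Xd p)]; exact ((hXd.isSelfAdjoint hX).isSymmetric p (X x)).symm
  rw [h₁, h₂, norm_add_sq_real, real_inner_smul_right]; ring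

theorem mul_apply_add_smul_inv_apply (p : H) {x : H} (hx : Xd (X x) = x) :
    (A * Xd) (X x + (1 / 2 : ℝ) • Xd p) = A x + (1 / 2 : ℝ) • A (Xd (Xd p)) := by
  rw [map_add, mul_apply_eq_comp, mul_apply_eq_comp, hx, map_smul, map_smul]

theorem apply_sub_smul_add_smul [CompleteSpace H] (hX : IsSelfAdjoint X)
    (hXd : IsMoorePenroseInverse X Xd) (hC : IsMoorePenroseInverse (A * Xd) Cd) (p d : H) :
    X (Xd (Cd d) - (1 / 2 : ℝ) • Xd (Xd p)) + (1 / 2 : ℝ) • Xd p = Cd d := by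
  have hXXd : X (Xd (Xd p)) = Xd p := DFunLike.congr_fun (hXd.mul_mul_inv hX) p
  rw [map_sub, map_smul, hXXd, sub_add_cancel]
  exact DFunLike.congr_fun (hXd.mul_inv_mul_of_comp hX hC) d

theorem inner_apply_apply_add_inner_eq_add_norm_sq [CompleteSpace H] (hX : IsSelfAdjoint X)
    (hXd : IsMoorePenroseInverse X Xd) (hC : IsMoorePenroseInverse (A * Xd) Cd) {p b x y : H}
    (hx : Xd (X x) = x) (hxA : A x = b) (hy : Xd (X y) = y)
    (hyC : X y + (1 / 2 : ℝ) • Xd p = Cd ((1 / 2 : ℝ) • A (Xd (Xd p)) + b)) :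
    ⟪x, X (X x)⟫ + ⟪p, x⟫ = ⟪y, X (X y)⟫ + ⟪p, y⟫ + ‖X (x - y)‖ ^ 2 := by
  have hz : (A * Xd) (X x + (1 / 2 : ℝ) • Xd p) = (1 / 2 : ℝ) • A (Xd (Xd p)) + b := by
    rw [mul_apply_add_smul_inv_apply p hx, hxA, add_comm]
  rw [inner_apply_apply_add_inner_eq_norm_sq_sub hX hXd p hx,
    inner_apply_apply_add_inner_eq_norm_sq_sub hX hXd p hy, hC.norm_sq_eq_norm_sq_add_norm_sq_sub hz, ← hyC, map_sub,
    add_sub_add_right_eq_sub]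
  ring

end QuadraticFunctional

theorem min_quadratic_functional_pos_semidef_general
    {H : Type*} [NormedAddCommGroup H] [InnerProductSpace ℝ H] [CompleteSpace H]
    (T X A Xd Td Cd : H →L[ℝ] H) (b p : H) (a : ℝ)
    (hX : X.IsPositive) (hX2 : X ∘L X = T)
    (hS : ∃ x, A x = b ∧ x ∈ (LinearMap.ker (T : H →ₗ[ℝ] H))ᗮ)
    -- `Xd` is the Moore–Penrose inverse of `X`:
    (hXd1 : X ∘L Xd ∘L X = X) (hXd2 : Xd ∘L X ∘L Xd = Xd)
    (hXd3 : ContinuousLinearMap.adjoint (X ∘L Xd) = X ∘L Xd)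
    (hXd4 : ContinuousLinearMap.adjoint (Xd ∘L X) = Xd ∘L X)
    -- `Td` is the Moore–Penrose inverse of `T`:
    (hTd1 : T ∘L Td ∘L T = T) (hTd2 : Td ∘L T ∘L Td = Td)
    (hTd3 : ContinuousLinearMap.adjoint (T ∘L Td) = T ∘L Td)
    (hTd4 : ContinuousLinearMap.adjoint (Td ∘L T) = Td ∘L T)
    -- `Cd` is the Moore–Penrose inverse of `C = A ∘ X‡`:
    (hCd1 : (A ∘L Xd) ∘L Cd ∘L (A ∘L Xd) = A ∘L Xd)
    (hCd2 : Cd ∘L (A ∘L Xd) ∘L Cd = Cd)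
    (hCd3 : ContinuousLinearMap.adjoint ((A ∘L Xd) ∘L Cd) = (A ∘L Xd) ∘L Cd)
    (hCd4 : ContinuousLinearMap.adjoint (Cd ∘L (A ∘L Xd)) = Cd ∘L (A ∘L Xd))
    (Φ : H → ℝ) (hΦ : ∀ x, Φ x = ⟪x, T x⟫ + ⟪p, x⟫ + a)
    (xhat : H)
    (hxhat : xhat = Xd (Cd ((1/2 : ℝ) • A (Td p) + b)) - (1/2 : ℝ) • Td p) :
    (A xhat = b ∧ xhat ∈ (LinearMap.ker (T : H →ₗ[ℝ] H))ᗮ) ∧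
      (∀ x, A x = b → x ∈ (LinearMap.ker (T : H →ₗ[ℝ] H))ᗮ → Φ xhat ≤ Φ x) ∧
      (∀ x, A x = b → x ∈ (LinearMap.ker (T : H →ₗ[ℝ] H))ᗮ → Φ x = Φ xhat → x = xhat) := by
  have hXsa : IsSelfAdjoint X := hX.isSelfAdjoint
  have hXd : IsMoorePenroseInverse X Xd := .of_comp hXd1 hXd2 hXd3 hXd4
  have hC : IsMoorePenroseInverse (A * Xd) Cd := .of_comp hCd1 hCd2 hCd3 hCd4
  have hTd : Td = Xd * Xd :=
    (IsMoorePenroseInverse.of_comp hTd1 hTd2 hTd3 hTd4).unique (hX2 ▸ hXd.mul_self hXsa)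
  have hker : LinearMap.ker (T : H →ₗ[ℝ] H) = LinearMap.ker (X : H →ₗ[ℝ] H) := by
    simpa [hXsa.adjoint_eq, hX2] using ContinuousLinearMap.ker_adjoint_comp_self X
  subst hTd hX2 hxhat
  simp only [hker, hXd.mem_orthogonal_ker_iff, mul_apply_eq_comp, ContinuousLinearMap.comp_apply]
    at hS hΦ ⊢
  set d := (1 / 2 : ℝ) • A (Xd (Xd p)) + b
  set xhat := Xd (Cd d) - (1 / 2 : ℝ) • Xd (Xd p)
  have hXxhat : X xhat + (1 / 2 : ℝ) • Xd p = Cd d := apply_sub_smul_add_smul hXsa hXd hC p d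
  have hxhat : Xd (X xhat) = xhat := by
    rw [show xhat = Xd (Cd d - (1 / 2 : ℝ) • Xd p) by simp [xhat], hXd.inv_mul_inv_apply]
  have hAxhat : A xhat = b := by
    obtain ⟨x₀, hx₀A, hx₀⟩ := hS
    have hz : (A * Xd) (X x₀ + (1 / 2 : ℝ) • Xd p) = d := by
      rw [mul_apply_add_smul_inv_apply p hx₀, hx₀A, add_comm]
    have hd : (A * Xd) (Cd d) = d := by rw [← hz, hC.mul_inv_mul_apply]
    have h := mul_apply_add_smul_inv_apply (A := A) p hxhat
    rw [hXxhat, hd] at h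
    exact add_right_cancel (h.symm.trans (add_comm _ _))
  have hΦxhat : ∀ x, A x = b → Xd (X x) = x → Φ x = Φ xhat + ‖X (x - xhat)‖ ^ 2 :=
    fun x hxA hx => by
      rw [hΦ, hΦ, inner_apply_apply_add_inner_eq_add_norm_sq hXsa hXd hC hx hxA hxhat hXxhat]
      ring
  refine ⟨⟨hAxhat, hxhat⟩, fun x hxA hx => ?_, fun x hxA hx hΦx => ?_⟩
  · rw [hΦxhat x hxA hx]
    exact le_add_of_nonneg_right (sq_nonneg _)
  · have h0 : X (x - xhat) = 0 := by simpa [hΦx] using hΦxhat x hxA hx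
    calc x = xhat + Xd (X (x - xhat)) := by rw [map_sub, map_sub, hx, hxhat, add_sub_cancel]
      _ = xhat := by rw [h0, map_zero, add_zero]

/-- Restricted linearly constrained minimization of a positive semidefinite quadratic
functional `Φ(x) = ⟪x, Tx⟫ + ⟪p, x⟫ + a` over `S ∩ N(T)^⊥`, where `S = {x : A x = b}`:
assuming `P_{A*} P_T` has closed range, the unique minimizer is
`x̂ = X‡ (A X‡)‡ ((1/2) A T‡ p + b) − (1/2) T‡ p`, where `X` is the positive square root
of `T` and `‡` denotes the Moore–Penrose inverse. -/
theorem min_quadratic_functional_pos_semidef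
    {H : Type*} [NormedAddCommGroup H] [InnerProductSpace ℝ H] [CompleteSpace H]
    (T X A Xd Td Cd PA PT : H →L[ℝ] H) (b p : H) (a : ℝ)
    (hT : T.IsPositive) (hTrange : IsClosed (LinearMap.range (T : H →ₗ[ℝ] H) : Set H))
    (hX : X.IsPositive) (hX2 : X ∘L X = T)
    (hA : IsClosed (LinearMap.range (A : H →ₗ[ℝ] H) : Set H))
    (hS : ∃ x, A x = b ∧ x ∈ (LinearMap.ker (T : H →ₗ[ℝ] H))ᗮ)
    -- `Xd` is the Moore–Penrose inverse of `X`: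
    (hXd1 : X ∘L Xd ∘L X = X) (hXd2 : Xd ∘L X ∘L Xd = Xd)
    (hXd3 : ContinuousLinearMap.adjoint (X ∘L Xd) = X ∘L Xd)
    (hXd4 : ContinuousLinearMap.adjoint (Xd ∘L X) = Xd ∘L X)
    -- `Td` is the Moore–Penrose inverse of `T`:
    (hTd1 : T ∘L Td ∘L T = T) (hTd2 : Td ∘L T ∘L Td = Td)
    (hTd3 : ContinuousLinearMap.adjoint (T ∘L Td) = T ∘L Td)
    (hTd4 : ContinuousLinearMap.adjoint (Td ∘L T) = Td ∘L T)
    -- `PA` is the orthogonal projection onto `N(A)^⊥` and `PT` that onto `R(T)`: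
    (hPA : ∀ x, PA x ∈ (LinearMap.ker (A : H →ₗ[ℝ] H))ᗮ ∧ x - PA x ∈ ((LinearMap.ker (A : H →ₗ[ℝ] H))ᗮ)ᗮ)
    (hPT : ∀ x, PT x ∈ LinearMap.range (T : H →ₗ[ℝ] H) ∧ x - PT x ∈ (LinearMap.range (T : H →ₗ[ℝ] H))ᗮ)
    (hclosed : IsClosed (LinearMap.range ((PA ∘L PT : H →L[ℝ] H) : H →ₗ[ℝ] H) : Set H))
    -- `Cd` is the Moore–Penrose inverse of `C = A ∘ X‡`:
    (hCd1 : (A ∘L Xd) ∘L Cd ∘L (A ∘L Xd) = A ∘L Xd)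
    (hCd2 : Cd ∘L (A ∘L Xd) ∘L Cd = Cd)
    (hCd3 : ContinuousLinearMap.adjoint ((A ∘L Xd) ∘L Cd) = (A ∘L Xd) ∘L Cd)
    (hCd4 : ContinuousLinearMap.adjoint (Cd ∘L (A ∘L Xd)) = Cd ∘L (A ∘L Xd))
    (Φ : H → ℝ) (hΦ : ∀ x, Φ x = ⟪x, T x⟫ + ⟪p, x⟫ + a)
    (xhat : H)
    (hxhat : xhat = Xd (Cd ((1/2 : ℝ) • A (Td p) + b)) - (1/2 : ℝ) • Td p) :
    (A xhat = b ∧ xhat ∈ (LinearMap.ker (T : H →ₗ[ℝ] H))ᗮ) ∧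
      (∀ x, A x = b → x ∈ (LinearMap.ker (T : H →ₗ[ℝ] H))ᗮ → Φ xhat ≤ Φ x) ∧
      (∀ x, A x = b → x ∈ (LinearMap.ker (T : H →ₗ[ℝ] H))ᗮ → Φ x = Φ xhat → x = xhat) :=
  min_quadratic_functional_pos_semidef_general T X A Xd Td Cd b p a hX hX2 hS hXd1 hXd2 hXd3 hXd4
    hTd1 hTd2 hTd3 hTd4 hCd1 hCd2 hCd3 hCd4 Φ hΦ xhat hxhat
end

section
/- Let H be a real Hilbert space, let X be a positive bounded operator on H with closed range, and let X‡ be the Moore–Penrose inverse of X. Then (X‡)² is the Moore–Penrose inverse of X², i.e., the pair (X², (X‡)²) satisfies the four Penrose equations. -/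
/-! For self-adjoint `X` the Penrose equations force `X` and `X‡` to commute: both `X X‡`
and `X‡ X` equal the product `(X X‡)(X‡ X)`. For a commuting pair every power `X‡ⁿ` is the
Moore–Penrose inverse of `Xⁿ`, because `Xⁿ X‡ⁿ Xⁿ = (X X‡ X)ⁿ` and `Xⁿ X‡ⁿ = (X X‡)ⁿ`. -/

structure IsMoorePenroseInverse_s4 {R : Type*} [Mul R] [Star R] (a b : R) : Prop where
  mul_inv_mul : a * b * a = a
  inv_mul_inv : b * a * b = b
  isSelfAdjoint_mul_inv : IsSelfAdjoint (a * b)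
  isSelfAdjoint_inv_mul : IsSelfAdjoint (b * a)

namespace IsMoorePenroseInverse_s4

theorem commute_of_isSelfAdjoint {R : Type*} [Semigroup R] [StarMul R] {a b : R}
    (h : IsMoorePenroseInverse_s4 a b) (ha : IsSelfAdjoint a) : Commute a b := by
  have hstar_left : star b * a = a * b := by
    rw [← h.isSelfAdjoint_mul_inv.star_eq, star_mul, ha.star_eq]
  have hstar_right : a * star b = b * a := by
    rw [← h.isSelfAdjoint_inv_mul.star_eq, star_mul, ha.star_eq]
  have hab : a * b = a * b * (b * a) :=
    calc a * b = star b * (a * b * a) := by rw [h.mul_inv_mul, hstar_left]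
      _ = star b * a * (b * a) := by simp only [mul_assoc]
      _ = a * b * (b * a) := by rw [hstar_left]
  have hba : b * a = a * b * (b * a) :=
    calc b * a = a * b * a * star b := by rw [h.mul_inv_mul, hstar_right]
      _ = a * b * (a * star b) := by simp only [mul_assoc]
      _ = a * b * (b * a) := by rw [hstar_right]
  exact hab.trans hba.symm

theorem pow {R : Type*} [Monoid R] [StarMul R] {a b : R}
    (h : IsMoorePenroseInverse_s4 a b) (hab : Commute a b) (n : ℕ) :
    IsMoorePenroseInverse_s4 (a ^ n) (b ^ n) where
  mul_inv_mul := by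
    rw [← hab.mul_pow, ← ((Commute.refl a).mul_left hab.symm).mul_pow, h.mul_inv_mul]
  inv_mul_inv := by
    rw [← hab.symm.mul_pow, ← ((Commute.refl b).mul_left hab).mul_pow, h.inv_mul_inv]
  isSelfAdjoint_mul_inv := hab.mul_pow n ▸ h.isSelfAdjoint_mul_inv.pow n
  isSelfAdjoint_inv_mul := hab.symm.mul_pow n ▸ h.isSelfAdjoint_inv_mul.pow n

end IsMoorePenroseInverse_s4

theorem sq_moore_penrose_general
    {H : Type*} [NormedAddCommGroup H] [InnerProductSpace ℝ H] [CompleteSpace H]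
    (X Xd : H →L[ℝ] H)
    (hX : X.IsPositive)
    -- `Xd` is the Moore–Penrose inverse of `X`:
    (hXd1 : X ∘L Xd ∘L X = X) (hXd2 : Xd ∘L X ∘L Xd = Xd)
    (hXd3 : ContinuousLinearMap.adjoint (X ∘L Xd) = X ∘L Xd)
    (hXd4 : ContinuousLinearMap.adjoint (Xd ∘L X) = Xd ∘L X) :
    (X ∘L X) ∘L (Xd ∘L Xd) ∘L (X ∘L X) = X ∘L X ∧
    (Xd ∘L Xd) ∘L (X ∘L X) ∘L (Xd ∘L Xd) = Xd ∘L Xd ∧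
    ContinuousLinearMap.adjoint ((X ∘L X) ∘L (Xd ∘L Xd)) = (X ∘L X) ∘L (Xd ∘L Xd) ∧
    ContinuousLinearMap.adjoint ((Xd ∘L Xd) ∘L (X ∘L X)) = (Xd ∘L Xd) ∘L (X ∘L X) := by
  have hmp : IsMoorePenroseInverse_s4 X Xd :=
    { mul_inv_mul := hXd1
      inv_mul_inv := hXd2
      isSelfAdjoint_mul_inv := (ContinuousLinearMap.star_eq_adjoint _).trans hXd3
      isSelfAdjoint_inv_mul := (ContinuousLinearMap.star_eq_adjoint _).trans hXd4 }
  obtain ⟨h1, h2, h3, h4⟩ := hmp.pow (hmp.commute_of_isSelfAdjoint hX.isSelfAdjoint) 2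
  rw [pow_two, pow_two] at h1 h2 h3 h4
  rw [IsSelfAdjoint, ContinuousLinearMap.star_eq_adjoint] at h3 h4
  exact ⟨h1, h2, h3, h4⟩

/-- If `X` is a positive operator with closed range and Moore–Penrose inverse `X‡`,
then `(X‡)²` is the Moore–Penrose inverse of `X²`, i.e. the pair `(X², (X‡)²)`
satisfies the four Penrose equations. -/
theorem sq_moore_penrose
    {H : Type*} [NormedAddCommGroup H] [InnerProductSpace ℝ H] [CompleteSpace H]
    (X Xd : H →L[ℝ] H)
    (hX : X.IsPositive) (hXrange : IsClosed (LinearMap.range (X : H →ₗ[ℝ] H) : Set H))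
    -- `Xd` is the Moore–Penrose inverse of `X`:
    (hXd1 : X ∘L Xd ∘L X = X) (hXd2 : Xd ∘L X ∘L Xd = Xd)
    (hXd3 : ContinuousLinearMap.adjoint (X ∘L Xd) = X ∘L Xd)
    (hXd4 : ContinuousLinearMap.adjoint (Xd ∘L X) = Xd ∘L X) :
    (X ∘L X) ∘L (Xd ∘L Xd) ∘L (X ∘L X) = X ∘L X ∧
    (Xd ∘L Xd) ∘L (X ∘L X) ∘L (Xd ∘L Xd) = Xd ∘L Xd ∧
    ContinuousLinearMap.adjoint ((X ∘L X) ∘L (Xd ∘L Xd)) = (X ∘L X) ∘L (Xd ∘L Xd) ∧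
    ContinuousLinearMap.adjoint ((Xd ∘L Xd) ∘L (X ∘L X)) = (Xd ∘L Xd) ∘L (X ∘L X) :=
  sq_moore_penrose_general X Xd hX hXd1 hXd2 hXd3 hXd4
end

section
/- Let H be a real Hilbert space, let T be a positive bounded operator on H with closed range, let X be the positive square root of T with Moore–Penrose inverse X‡, and let A be a bounded operator on H with closed range. Then A ∘ X‡ has closed range if and only if the operator P_{A*} P_T (the composition of the orthogonal projection onto N(A)^⊥ with the orthogonal projection onto the range of T) has closed range. -/
/-!
Both ranges are images of `R(T)`. The Penrose equations give `R(X‡) = R(X‡X) = N(X‡X)ᗮ = N(X)ᗮ`,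
and `N(X) = N(X²) = N(T)` with `N(T)ᗮ = R(T)` since `T` is self-adjoint with closed range. Hence
`R(A X‡) = A(R(T)) = A(P_{A*} R(T))`, while `R(P_{A*} P_T) = P_{A*} R(T) ⊆ N(A)ᗮ`. As `R(A)` is
closed, the open mapping theorem makes `A` restricted to `N(A)ᗮ` an isomorphism onto `R(A)`, so a
subspace `N ⊆ N(A)ᗮ` is closed iff `A(N)` is.
-/

open ContinuousLinearMap Submodule

section Banach

variable {𝕜 E F : Type*} [NontriviallyNormedField 𝕜]
  [NormedAddCommGroup E] [NormedSpace 𝕜 E] [CompleteSpace E]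
  [NormedAddCommGroup F] [NormedSpace 𝕜 F] [CompleteSpace F]

theorem ContinuousLinearMap.isClosed_map_iff_of_injective_of_isClosed_range (f : E →L[𝕜] F)
    (hf : Function.Injective f) (hrange : IsClosed (Set.range f)) (N : Submodule 𝕜 E) :
    IsClosed (N.map (f : E →ₗ[𝕜] F) : Set F) ↔ IsClosed (N : Set E) := by
  obtain ⟨K, hK⟩ := f.antilipschitz_of_injective_of_isClosed_range hf hrange
  rw [Submodule.map_coe]
  exact (hK.isClosedEmbedding f.uniformContinuous).isClosed_iff_image_isClosed.symm

end Banach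

theorem LinearMap.range_eq_of_forall_mem_and_sub_mem_orthogonal {𝕜 E : Type*} [RCLike 𝕜]
    [NormedAddCommGroup E] [InnerProductSpace 𝕜 E] {P : E →ₗ[𝕜] E} {K : Submodule 𝕜 E}
    (hP : ∀ x, P x ∈ K ∧ x - P x ∈ Kᗮ) : P.range = K := by
  refine le_antisymm (LinearMap.range_le_iff_comap.mpr ?_) fun y hy ↦ ?_
  · exact eq_top_iff.mpr fun x _ ↦ (hP x).1
  · have : y - P y = 0 :=
      (mem_bot 𝕜).mp ((orthogonal_disjoint K).le_bot ⟨sub_mem hy (hP y).1, (hP y).2⟩)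
    exact ⟨y, (sub_eq_zero.mp this).symm⟩

section Hilbert

variable {𝕜 E F : Type*} [RCLike 𝕜]
  [NormedAddCommGroup E] [InnerProductSpace 𝕜 E] [CompleteSpace E]
  [NormedAddCommGroup F] [InnerProductSpace 𝕜 F]

theorem ContinuousLinearMap.range_comp_subtypeL_orthogonal_ker (A : E →L[𝕜] F) :
    (A ∘L A.kerᗮ.subtypeL).range = A.range := by
  refine le_antisymm (LinearMap.range_comp_le_range _ _) ?_
  rintro _ ⟨x, rfl⟩
  have hker : x - A.kerᗮ.starProjection x ∈ A.ker := by
    simpa only [orthogonal_orthogonal] using sub_starProjection_mem_orthogonal (K := A.kerᗮ) x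
  refine ⟨⟨_, starProjection_apply_mem _ x⟩, ?_⟩
  rw [LinearMap.mem_ker, map_sub, sub_eq_zero] at hker
  exact hker.symm

theorem ContinuousLinearMap.isClosed_map_iff_of_le_orthogonal_ker [CompleteSpace F]
    (A : E →L[𝕜] F)
    (hA : IsClosed (A.range : Set F)) {N : Submodule 𝕜 E} (hN : N ≤ A.kerᗮ) :
    IsClosed (N.map (A : E →ₗ[𝕜] F) : Set F) ↔ IsClosed (N : Set E) := by
  set K := A.kerᗮ
  set N' := N.comap K.subtype
  have hN' : N'.map K.subtype = N := by
    rw [map_comap_subtype, inf_eq_right.mpr hN]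
  have hinj : Function.Injective (A ∘L K.subtypeL) := by
    rw [← coe_coe, ← LinearMap.ker_eq_bot, eq_bot_iff]
    intro x hx
    have hx0 : (x : E) = 0 := (mem_bot 𝕜).mp ((orthogonal_disjoint A.ker).le_bot ⟨hx, x.2⟩)
    exact (mem_bot 𝕜).mpr (Subtype.ext hx0)
  calc IsClosed (N.map (A : E →ₗ[𝕜] F) : Set F)
        ↔ IsClosed (N'.map ((A ∘L K.subtypeL : K →L[𝕜] F) : K →ₗ[𝕜] F) : Set F) := by
        rw [← hN', ← map_comp]; rfl
    _ ↔ IsClosed (N' : Set K) :=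
        (A ∘L K.subtypeL).isClosed_map_iff_of_injective_of_isClosed_range hinj
          (by rw [← coe_coe, ← LinearMap.coe_range, range_comp_subtypeL_orthogonal_ker]; exact hA) N'
    _ ↔ IsClosed (N : Set E) := by
        rw [← hN']
        exact (K.subtypeL.isClosed_map_iff_of_injective_of_isClosed_range Subtype.val_injective
          (by simpa using A.ker.isClosed_orthogonal) N').symm

theorem IsSelfAdjoint.orthogonal_ker_eq_range {T : E →L[𝕜] E} (hT : IsSelfAdjoint T)
    (hrange : IsClosed (T.range : Set E)) : T.kerᗮ = T.range := by
  rw [orthogonal_ker, hT.adjoint_eq, hrange.submodule_topologicalClosure_eq]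

theorem IsSelfAdjoint.ker_comp_self {X : E →L[𝕜] E} (hX : IsSelfAdjoint X) :
    (X ∘L X).ker = X.ker := by
  simpa only [hX.adjoint_eq] using X.ker_adjoint_comp_self

theorem ContinuousLinearMap.range_eq_orthogonal_ker_of_moorePenrose {X : E →L[𝕜] F}
    {Xd : F →L[𝕜] E} (h1 : X ∘L Xd ∘L X = X) (h2 : Xd ∘L X ∘L Xd = Xd)
    (h4 : adjoint (Xd ∘L X) = Xd ∘L X) : Xd.range = X.kerᗮ := by
  have hrange : Xd.range = (Xd ∘L X).range := by
    refine le_antisymm ?_ (LinearMap.range_comp_le_range (X : E →ₗ[𝕜] F) (Xd : F →ₗ[𝕜] E))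
    conv_lhs => rw [← h2, ← comp_assoc]
    exact LinearMap.range_comp_le_range (Xd : F →ₗ[𝕜] E) ((Xd ∘L X : E →L[𝕜] E) : E →ₗ[𝕜] E)
  have hker : (Xd ∘L X).ker = X.ker := by
    refine le_antisymm (fun x hx ↦ ?_) (LinearMap.ker_le_ker_comp _ _)
    rw [LinearMap.mem_ker, coe_coe, ← h1]
    exact congrArg X hx |>.trans (map_zero X)
  have hidem : IsIdempotentElem (Xd ∘L X) := by
    rw [IsIdempotentElem, mul_def, comp_assoc, h1]
  rw [hrange, ← hker, IsSelfAdjoint.orthogonal_ker_eq_range h4 hidem.isClosed_range]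

end Hilbert

theorem closed_range_comp_pinv_iff_general
    {H : Type*} [NormedAddCommGroup H] [InnerProductSpace ℝ H] [CompleteSpace H]
    (T X Xd A PA PT : H →L[ℝ] H)
    (hT : T.IsPositive) (hTrange : IsClosed (LinearMap.range (T : H →ₗ[ℝ] H) : Set H))
    (hX : X.IsPositive) (hX2 : X ∘L X = T)
    -- `Xd` is the Moore–Penrose inverse of `X`:
    (hXd1 : X ∘L Xd ∘L X = X) (hXd2 : Xd ∘L X ∘L Xd = Xd)
    (hXd4 : ContinuousLinearMap.adjoint (Xd ∘L X) = Xd ∘L X)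
    (hA : IsClosed (LinearMap.range (A : H →ₗ[ℝ] H) : Set H))
    -- `PA` is the orthogonal projection onto `N(A)^⊥` and `PT` that onto `R(T)`:
    (hPA : ∀ x, PA x ∈ (LinearMap.ker (A : H →ₗ[ℝ] H))ᗮ ∧ x - PA x ∈ ((LinearMap.ker (A : H →ₗ[ℝ] H))ᗮ)ᗮ)
    (hPT : ∀ x, PT x ∈ LinearMap.range (T : H →ₗ[ℝ] H) ∧ x - PT x ∈ (LinearMap.range (T : H →ₗ[ℝ] H))ᗮ) :
    IsClosed (LinearMap.range ((A ∘L Xd : H →L[ℝ] H) : H →ₗ[ℝ] H) : Set H) ↔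
      IsClosed (LinearMap.range ((PA ∘L PT : H →L[ℝ] H) : H →ₗ[ℝ] H) : Set H) := by
  have hXd_range : Xd.range = T.range := by
    rw [range_eq_orthogonal_ker_of_moorePenrose hXd1 hXd2 hXd4, ← hX.isSelfAdjoint.ker_comp_self,
      hX2, hT.isSelfAdjoint.orthogonal_ker_eq_range hTrange]
  have hPT_range : PT.range = T.range :=
    LinearMap.range_eq_of_forall_mem_and_sub_mem_orthogonal (P := (PT : H →ₗ[ℝ] H)) hPT
  have hA_PA : A ∘L PA = A := by
    ext x
    have hx := (hPA x).2
    rw [orthogonal_orthogonal, LinearMap.mem_ker, map_sub, sub_eq_zero] at hx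
    exact hx.symm
  have hrange : (A ∘L Xd).range = (PA ∘L PT).range.map (A : H →ₗ[ℝ] H) := by
    rw [toLinearMap_comp, toLinearMap_comp, LinearMap.range_comp,
      LinearMap.range_comp, hXd_range, hPT_range, ← map_comp, ← toLinearMap_comp, hA_PA]
  rw [hrange]
  refine A.isClosed_map_iff_of_le_orthogonal_ker hA ?_
  rintro _ ⟨x, rfl⟩
  exact (hPA _).1

/-- Let `T` be positive with closed range, `X` its positive square root with
Moore–Penrose inverse `X‡`, and `A` a bounded operator with closed range.  Then
`A ∘ X‡` has closed range iff `P_{A*} P_T` has closed range, where `P_{A*}` is the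
orthogonal projection onto `N(A)^⊥` and `P_T` that onto `R(T)`. -/
theorem closed_range_comp_pinv_iff
    {H : Type*} [NormedAddCommGroup H] [InnerProductSpace ℝ H] [CompleteSpace H]
    (T X Xd A PA PT : H →L[ℝ] H)
    (hT : T.IsPositive) (hTrange : IsClosed (LinearMap.range (T : H →ₗ[ℝ] H) : Set H))
    (hX : X.IsPositive) (hX2 : X ∘L X = T)
    -- `Xd` is the Moore–Penrose inverse of `X`:
    (hXd1 : X ∘L Xd ∘L X = X) (hXd2 : Xd ∘L X ∘L Xd = Xd)
    (hXd3 : ContinuousLinearMap.adjoint (X ∘L Xd) = X ∘L Xd)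
    (hXd4 : ContinuousLinearMap.adjoint (Xd ∘L X) = Xd ∘L X)
    (hA : IsClosed (LinearMap.range (A : H →ₗ[ℝ] H) : Set H))
    -- `PA` is the orthogonal projection onto `N(A)^⊥` and `PT` that onto `R(T)`:
    (hPA : ∀ x, PA x ∈ (LinearMap.ker (A : H →ₗ[ℝ] H))ᗮ ∧ x - PA x ∈ ((LinearMap.ker (A : H →ₗ[ℝ] H))ᗮ)ᗮ)
    (hPT : ∀ x, PT x ∈ LinearMap.range (T : H →ₗ[ℝ] H) ∧ x - PT x ∈ (LinearMap.range (T : H →ₗ[ℝ] H))ᗮ) :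
    IsClosed (LinearMap.range ((A ∘L Xd : H →L[ℝ] H) : H →ₗ[ℝ] H) : Set H) ↔
      IsClosed (LinearMap.range ((PA ∘L PT : H →L[ℝ] H) : H →ₗ[ℝ] H) : Set H) :=
  closed_range_comp_pinv_iff_general T X Xd A PA PT hT hTrange hX hX2 hXd1 hXd2 hXd4 hA hPA hPT
end

section
/- Let H be a real Hilbert space and let A and B be bounded operators on H, each with closed range. Then the composition A ∘ B has closed range if and only if the operator P_{A*} ∘ P_B has closed range, where P_{A*} is the orthogonal projection of H onto N(A)^⊥ = R(A*) and P_B is the orthogonal projection of H onto the range of B. -/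
/-!
With `S = P_{A*}(R(B)) ⊆ N(A)^⊥` we have `R(P_{A*} P_B) = S` and, since `A P_{A*} = A`,
`R(AB) = A(S)`. As `A` has closed range, its restriction to `N(A)^⊥` is injective with closed
range, hence bounded below by the open mapping theorem, i.e. a closed embedding. So `A(S)` is
closed iff `S` is.
-/

open Set Topology

lemma isClosed_image_iff_of_isClosedEmbedding_domRestrict {X Y : Type*} [TopologicalSpace X]
    [TopologicalSpace Y] {K S : Set X} {f : X → Y} (hK : IsClosed K)
    (hf : IsClosedEmbedding (K.domRestrict f)) (hS : S ⊆ K) :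
    IsClosed (f '' S) ↔ IsClosed S := by
  have hval : Subtype.val '' (Subtype.val ⁻¹' S : Set K) = S := by simpa using hS
  rw [← hval, image_image, ← hK.isClosedEmbedding_subtypeVal.isClosed_iff_image_isClosed]
  exact hf.isClosed_iff_image_isClosed.symm

section InnerProductSpace

variable {𝕜 E : Type*} [RCLike 𝕜] [NormedAddCommGroup E] [InnerProductSpace 𝕜 E]

def IsOrthogonalProjectionOnto (U : Submodule 𝕜 E) (P : E → E) : Prop :=
  ∀ x, P x ∈ U ∧ x - P x ∈ Uᗮ

namespace IsOrthogonalProjectionOnto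

variable {U : Submodule 𝕜 E} {P : E → E}

lemma apply_eq_self (hP : IsOrthogonalProjectionOnto U P) {y : E} (hy : y ∈ U) : P y = y := by
  have hdiff : y - P y = 0 :=
    Submodule.disjoint_def.1 U.orthogonal_disjoint _ (sub_mem hy (hP y).1) (hP y).2
  exact (sub_eq_zero.1 hdiff).symm

lemma range_eq (hP : IsOrthogonalProjectionOnto U P) : range P = U :=
  Subset.antisymm (range_subset_iff.2 fun x ↦ (hP x).1) fun y hy ↦ ⟨y, hP.apply_eq_self hy⟩

lemma sub_mem_of_orthogonal [U.HasOrthogonalProjection] (hP : IsOrthogonalProjectionOnto Uᗮ P)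
    (x : E) : x - P x ∈ U :=
  U.orthogonal_orthogonal ▸ (hP x).2

end IsOrthogonalProjectionOnto

variable {F : Type*} [NormedAddCommGroup F] [NormedSpace 𝕜 F] [CompleteSpace E] [CompleteSpace F]

lemma ContinuousLinearMap.isClosedEmbedding_domRestrict_orthogonal_ker (A : E →L[𝕜] F)
    (hA : IsClosed (range A)) :
    IsClosedEmbedding (((LinearMap.ker (A : E →ₗ[𝕜] F))ᗮ : Set E).domRestrict A) := by
  set N := LinearMap.ker (A : E →ₗ[𝕜] F)
  have : CompleteSpace N := A.isClosed_ker.completeSpace_coe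
  set f := A ∘L Nᗮ.subtypeL
  have hinj : Function.Injective f := (injective_iff_map_eq_zero f).2 fun x hx ↦
    Subtype.ext (Submodule.disjoint_def.1 N.orthogonal_disjoint _ hx x.2)
  have hrange : range f = range A := by
    refine Subset.antisymm (range_subset_iff.2 fun x ↦ ⟨x, rfl⟩) ?_
    rintro _ ⟨x, rfl⟩
    obtain ⟨u, hu, v, hv, rfl⟩ := N.exists_add_mem_mem_orthogonal x
    exact ⟨⟨v, hv⟩, by simpa [f] using LinearMap.mem_ker.1 hu⟩
  obtain ⟨c, hc⟩ := f.antilipschitz_of_injective_of_isClosed_range hinj (hrange ▸ hA)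
  exact hc.isClosedEmbedding f.uniformContinuous

end InnerProductSpace

theorem closed_range_comp_iff_proj_comp_general
    {H : Type*} [NormedAddCommGroup H] [InnerProductSpace ℝ H] [CompleteSpace H]
    (A B PA PB : H →L[ℝ] H)
    (hA : IsClosed (LinearMap.range (A : H →ₗ[ℝ] H) : Set H))
    -- `PA` is the orthogonal projection onto `N(A)^⊥` and `PB` that onto `R(B)`:
    (hPA : ∀ x, PA x ∈ (LinearMap.ker (A : H →ₗ[ℝ] H))ᗮ ∧ x - PA x ∈ ((LinearMap.ker (A : H →ₗ[ℝ] H))ᗮ)ᗮ)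
    (hPB : ∀ x, PB x ∈ LinearMap.range (B : H →ₗ[ℝ] H) ∧ x - PB x ∈ (LinearMap.range (B : H →ₗ[ℝ] H))ᗮ) :
    IsClosed (LinearMap.range ((A ∘L B : H →L[ℝ] H) : H →ₗ[ℝ] H) : Set H) ↔
      IsClosed (LinearMap.range ((PA ∘L PB : H →L[ℝ] H) : H →ₗ[ℝ] H) : Set H) := by
  have : CompleteSpace (LinearMap.ker (A : H →ₗ[ℝ] H)) := A.isClosed_ker.completeSpace_coe
  have hAPA : A ∘ PA = A := funext fun x ↦
    (by simpa [sub_eq_zero] using IsOrthogonalProjectionOnto.sub_mem_of_orthogonal hPA x :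
      A x = A (PA x)).symm
  have hPBrange : range PB = range B := IsOrthogonalProjectionOnto.range_eq hPB
  have hrangePP : range (PA ∘ PB) = PA '' range B := by rw [range_comp, hPBrange]
  have hrangeAB : range (A ∘ B) = A '' (PA '' range B) := by
    rw [image_image, ← Function.comp_def, hAPA, range_comp]
  simp only [LinearMap.coe_range, ContinuousLinearMap.coe_comp, ContinuousLinearMap.coe_coe] at hA ⊢
  rw [hrangeAB, hrangePP]
  exact isClosed_image_iff_of_isClosedEmbedding_domRestrict (Submodule.isClosed_orthogonal _)
    (A.isClosedEmbedding_domRestrict_orthogonal_ker hA) (image_subset_iff.2 fun y _ ↦ (hPA y).1)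

/-- Izumino's criterion: for bounded operators `A`, `B` with closed range, the product
`A ∘ B` has closed range iff `P_{A*} ∘ P_B` has closed range, where `P_{A*}` is the
orthogonal projection onto `N(A)^⊥ = R(A*)` and `P_B` that onto `R(B)`. -/
theorem closed_range_comp_iff_proj_comp
    {H : Type*} [NormedAddCommGroup H] [InnerProductSpace ℝ H] [CompleteSpace H]
    (A B PA PB : H →L[ℝ] H)
    (hA : IsClosed (LinearMap.range (A : H →ₗ[ℝ] H) : Set H))
    (hB : IsClosed (LinearMap.range (B : H →ₗ[ℝ] H) : Set H))
    -- `PA` is the orthogonal projection onto `N(A)^⊥` and `PB` that onto `R(B)`: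
    (hPA : ∀ x, PA x ∈ (LinearMap.ker (A : H →ₗ[ℝ] H))ᗮ ∧ x - PA x ∈ ((LinearMap.ker (A : H →ₗ[ℝ] H))ᗮ)ᗮ)
    (hPB : ∀ x, PB x ∈ LinearMap.range (B : H →ₗ[ℝ] H) ∧ x - PB x ∈ (LinearMap.range (B : H →ₗ[ℝ] H))ᗮ) :
    IsClosed (LinearMap.range ((A ∘L B : H →L[ℝ] H) : H →ₗ[ℝ] H) : Set H) ↔
      IsClosed (LinearMap.range ((PA ∘L PB : H →L[ℝ] H) : H →ₗ[ℝ] H) : Set H) :=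
  closed_range_comp_iff_proj_comp_general A B PA PB hA hPA hPB
end
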